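/- Let F_q be a finite field with q elements and let a, b, n be positive natural numbers. The number of pairs (u, v) of nonzero coprime polynomials over F_q satisfying deg u ≤ a·n, deg v ≤ b·n, and (deg u = a·n or deg v = b·n), equals (q−1)·(q^{(a+b)n+1} − q^{(a+b)n−1}). -/

import Mathlib

open Polynomial

/-!
Dividing by leading coefficients, a pair of nonzero coprime polynomials of degrees `(i, j)` is
a pair of nonzero scalars times a coprime pair of monic polynomials, so it suffices to count the
latter, say `c(i, j)` of them. Factoring out the gcd sorts the `q ^ (i + j)` monic pairs of
degrees `(i, j)` by the degree `d` of their gcd: `q ^ (i + j) = ∑ d, q ^ d * c(i - d, j - d)`.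
Comparing this with the same identity for `(i - 1, j - 1)` gives
`c(i, j) = q ^ (i + j) - q ^ (i + j - 1)` for `i, j ≥ 1`, while `c(i, 0) = q ^ i`. Summed over the
degree pairs `(A, j)`, `j ≤ B`, and `(i, B)`, `i < A`, with `A = a n`, `B = b n`, this telescopes
to `q ^ (A + B) + q ^ (A + B - 1)`.
-/

section MonicOfDegree

variable {R : Type*} [Semiring R]

variable (R) in
def monicOfDegree (d : ℕ) : Set R[X] := {p | p.Monic ∧ p.natDegree = d}

theorem monicOfDegree_zero : monicOfDegree R 0 = {1} := by
  ext p
  exact ⟨fun ⟨hm, hd⟩ => hm.natDegree_eq_zero.1 hd,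
    by rintro rfl; exact ⟨monic_one, natDegree_one⟩⟩

variable [Nontrivial R]

theorem finite_monicOfDegree [Finite R] (d : ℕ) : (monicOfDegree R d).Finite :=
  have : Finite (monicOfDegree R d) :=
    .of_equiv _ ((monicEquivDegreeLT d).trans (degreeLTEquiv R d).toEquiv).symm
  Set.toFinite _

theorem ncard_monicOfDegree (d : ℕ) : (monicOfDegree R d).ncard = Nat.card R ^ d := by
  rw [← Nat.card_coe_set_eq,
    (Nat.card_congr ((monicEquivDegreeLT d).trans (degreeLTEquiv R d).toEquiv) :
      Nat.card (monicOfDegree R d) = _), Nat.card_fun, Nat.card_fin]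

end MonicOfDegree

theorem Set.ncard_biUnion_finset {ι α : Type*} {s : Finset ι} {t : ι → Set α}
    (ht : ∀ i ∈ s, (t i).Finite) (h : (s : Set ι).PairwiseDisjoint t) :
    (⋃ i ∈ s, t i).ncard = ∑ i ∈ s, (t i).ncard := by
  rw [← Finset.set_biUnion_coe, s.finite_toSet.ncard_biUnion ht h, finsum_mem_coe_finset]

theorem IsCoprime.dvd_of_dvd_mul_of_dvd_mul {R : Type*} [CommSemiring R] {d g u v : R}
    (huv : IsCoprime u v) (hu : d ∣ g * u) (hv : d ∣ g * v) : d ∣ g := by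
  obtain ⟨a, b, hab⟩ := huv
  calc d ∣ a * (g * u) + b * (g * v) :=
        dvd_add (dvd_mul_of_dvd_right hu a) (dvd_mul_of_dvd_right hv b)
    _ = g * (a * u + b * v) := by ring
    _ = g := by rw [hab, mul_one]

section Field

variable {F : Type*} [Field F]

variable (F) in
def coprimeMonicPairs (i j : ℕ) : Set (F[X] × F[X]) :=
  {p | p.1 ∈ monicOfDegree F i ∧ p.2 ∈ monicOfDegree F j ∧ IsCoprime p.1 p.2}

theorem finite_coprimeMonicPairs [Finite F] (i j : ℕ) : (coprimeMonicPairs F i j).Finite :=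
  ((finite_monicOfDegree i).prod (finite_monicOfDegree j)).subset fun _ hp => ⟨hp.1, hp.2.1⟩

theorem coprimeMonicPairs_zero_right (i : ℕ) :
    coprimeMonicPairs F i 0 = monicOfDegree F i ×ˢ {1} := by
  ext ⟨u, v⟩
  simp only [coprimeMonicPairs, monicOfDegree_zero, Set.mem_ofPred_eq, Set.mem_prod,
    Set.mem_singleton_iff]
  exact ⟨fun h => ⟨h.1, h.2.1⟩,
    fun ⟨hu, hv⟩ => ⟨hu, hv, hv ▸ isCoprime_one_right⟩⟩

theorem preimage_swap_coprimeMonicPairs (i j : ℕ) :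
    Prod.swap ⁻¹' coprimeMonicPairs F i j = coprimeMonicPairs F j i := by
  ext ⟨u, v⟩
  simp only [coprimeMonicPairs, Set.mem_preimage, Prod.fst_swap, Prod.snd_swap,
    Set.mem_ofPred_eq, isCoprime_comm (x := v)]
  tauto

theorem ncard_coprimeMonicPairs_comm (i j : ℕ) :
    (coprimeMonicPairs F i j).ncard = (coprimeMonicPairs F j i).ncard := by
  rw [← preimage_swap_coprimeMonicPairs, Set.ncard_preimage_of_injective_subset_range
    Prod.swap_injective (Prod.swap_surjective.range_eq ▸ Set.subset_univ _)]

theorem injOn_smul_of_monic_of_isCoprime :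
    Set.InjOn (fun x : F[X] × (F[X] × F[X]) => x.1 • x.2)
      {x | x.1.Monic ∧ IsCoprime x.2.1 x.2.2} := by
  rintro ⟨g, u, v⟩ ⟨hg, huv⟩ ⟨g', u', v'⟩ ⟨hg', huv'⟩ h
  simp only [Prod.smul_mk, smul_eq_mul, Prod.mk.injEq] at h
  obtain rfl : g = g' := eq_of_monic_of_associated hg hg' <| associated_of_dvd_dvd
    (huv'.dvd_of_dvd_mul_of_dvd_mul (h.1 ▸ dvd_mul_right g u) (h.2 ▸ dvd_mul_right g v))
    (huv.dvd_of_dvd_mul_of_dvd_mul (h.1 ▸ dvd_mul_right g' u') (h.2 ▸ dvd_mul_right g' v'))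
  rw [mul_left_cancel₀ hg.ne_zero h.1, mul_left_cancel₀ hg.ne_zero h.2]

theorem exists_monic_mul_coprime_monic {u v : F[X]} (hu : u.Monic) (hv : v.Monic) :
    ∃ g u₁ v₁ : F[X], g.Monic ∧ u₁.Monic ∧ v₁.Monic ∧ IsCoprime u₁ v₁ ∧
      u = g * u₁ ∧ v = g * v₁ := by
  classical
  obtain ⟨u₁, v₁, hu₁, hv₁, hgcd⟩ := extract_gcd u v
  have hg : (gcd u v).Monic := normalize_gcd u v ▸
    monic_normalize (mt (gcd_eq_zero_iff u v).1 fun h => hu.ne_zero h.1)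
  exact ⟨gcd u v, u₁, v₁, hg, hg.of_mul_monic_left (hu₁ ▸ hu),
    hg.of_mul_monic_left (hv₁ ▸ hv), (gcd_isUnit_iff u₁ v₁).1 hgcd, hu₁, hv₁⟩

theorem monicOfDegree_prod_eq_image (i j : ℕ) :
    monicOfDegree F i ×ˢ monicOfDegree F j =
      (fun x : F[X] × (F[X] × F[X]) => x.1 • x.2) ''
        ⋃ d ∈ Finset.range (min i j + 1),
          monicOfDegree F d ×ˢ coprimeMonicPairs F (i - d) (j - d) := by
  ext ⟨u, v⟩
  simp only [Set.mem_prod, Set.mem_image, Set.mem_iUnion, Finset.mem_range, Prod.exists,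
    Prod.smul_mk, smul_eq_mul, Prod.mk.injEq, exists_prop]
  constructor
  · rintro ⟨⟨hu, rfl⟩, hv, rfl⟩
    obtain ⟨g, u₁, v₁, hg, hu₁, hv₁, huv, rfl, rfl⟩ :=
      exists_monic_mul_coprime_monic hu hv
    have hdu := natDegree_mul hg.ne_zero hu₁.ne_zero
    have hdv := natDegree_mul hg.ne_zero hv₁.ne_zero
    refine ⟨g, u₁, v₁, ⟨g.natDegree, by omega, ⟨hg, rfl⟩, ⟨hu₁, ?_⟩, ⟨hv₁, ?_⟩, huv⟩,
      rfl, rfl⟩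
    all_goals (dsimp only; omega)
  · rintro ⟨g, u₁, v₁, ⟨d, hd, ⟨hg, rfl⟩, ⟨hu₁, hu₁d⟩, ⟨hv₁, hv₁d⟩, -⟩, rfl, rfl⟩
    refine ⟨⟨hg.mul hu₁, ?_⟩, hg.mul hv₁, ?_⟩
    · rw [natDegree_mul hg.ne_zero hu₁.ne_zero]; omega
    · rw [natDegree_mul hg.ne_zero hv₁.ne_zero]; omega

theorem pow_add_eq_sum_ncard_coprimeMonicPairs [Finite F] (i j : ℕ) :
    Nat.card F ^ (i + j) = ∑ d ∈ Finset.range (min i j + 1),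
      Nat.card F ^ d * (coprimeMonicPairs F (i - d) (j - d)).ncard := by
  rw [pow_add, ← ncard_monicOfDegree, ← ncard_monicOfDegree, ← Set.ncard_prod,
    monicOfDegree_prod_eq_image, Set.InjOn.ncard_image, Set.ncard_biUnion_finset]
  · simp only [Set.ncard_prod, ncard_monicOfDegree]
  · exact fun d _ => (finite_monicOfDegree d).prod (finite_coprimeMonicPairs _ _)
  · exact fun d _ e _ hde =>
      Set.disjoint_left.2 fun x hd he => hde (hd.1.2.symm.trans he.1.2)
  · refine injOn_smul_of_monic_of_isCoprime.mono ?_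
    simp only [Set.iUnion_subset_iff]
    exact fun d _ x hx => ⟨hx.1.1, hx.2.2.2⟩

theorem ncard_coprimeMonicPairs_add_pow [Finite F] (i j : ℕ) :
    (coprimeMonicPairs F (i + 1) (j + 1)).ncard + Nat.card F ^ (i + j + 1) =
      Nat.card F ^ (i + j + 2) := by
  have hshift : ∀ d ∈ Finset.range (min i j + 1),
      Nat.card F ^ (d + 1) * (coprimeMonicPairs F (i + 1 - (d + 1)) (j + 1 - (d + 1))).ncard =
        Nat.card F * (Nat.card F ^ d * (coprimeMonicPairs F (i - d) (j - d)).ncard) := by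
    intro d _
    rw [Nat.add_sub_add_right, Nat.add_sub_add_right, pow_succ']
    ring
  -- the terms with `d ≥ 1` add up to `q` times the same identity for `(i, j)`
  have h := pow_add_eq_sum_ncard_coprimeMonicPairs (F := F) (i + 1) (j + 1)
  rw [Nat.add_min_add_right, Finset.sum_range_succ', Finset.sum_congr rfl hshift,
    ← Finset.mul_sum, ← pow_add_eq_sum_ncard_coprimeMonicPairs, pow_zero, one_mul,
    Nat.sub_zero, Nat.sub_zero] at h
  linear_combination h.symm

theorem sum_range_ncard_coprimeMonicPairs [Finite F] (i j : ℕ) :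
    ∑ k ∈ Finset.range (j + 1), (coprimeMonicPairs F (i + 1) k).ncard =
      Nat.card F ^ (i + j + 1) := by
  induction j with
  | zero => simp [coprimeMonicPairs_zero_right, Set.ncard_prod, ncard_monicOfDegree]
  | succ j ih =>
    rw [Finset.sum_range_succ, ih, add_comm, ncard_coprimeMonicPairs_add_pow]
    ring_nf

variable (F) in
def coprimePairsOfDegree (i j : ℕ) : Set (F[X] × F[X]) :=
  {p | p.1 ≠ 0 ∧ p.2 ≠ 0 ∧ IsCoprime p.1 p.2 ∧ p.1.natDegree = i ∧ p.2.natDegree = j}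

theorem Polynomial.Monic.eq_and_eq_of_mul_C_eq_mul_C {m m' : F[X]} (hm : m.Monic)
    (hm' : m'.Monic) {c c' : F} (hc : c ≠ 0) (h : m * C c = m' * C c') : c = c' ∧ m = m' := by
  have hlc := congrArg Polynomial.leadingCoeff h
  rw [leadingCoeff_mul, leadingCoeff_mul, hm.leadingCoeff, hm'.leadingCoeff, leadingCoeff_C,
    leadingCoeff_C, one_mul, one_mul] at hlc
  subst hlc
  exact ⟨rfl, mul_right_cancel₀ (C_ne_zero.2 hc) h⟩

theorem coprimePairsOfDegree_eq_image (i j : ℕ) :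
    coprimePairsOfDegree F i j =
      (fun x : (Fˣ × Fˣ) × (F[X] × F[X]) => (x.2.1 * C (x.1.1 : F), x.2.2 * C (x.1.2 : F))) ''
        (Set.univ ×ˢ coprimeMonicPairs F i j) := by
  ext ⟨u, v⟩
  constructor
  · rintro ⟨hu, hv, huv, rfl, rfl⟩
    have hcu := leadingCoeff_ne_zero.2 hu
    have hcv := leadingCoeff_ne_zero.2 hv
    refine ⟨((.mk0 _ hcu, .mk0 _ hcv), (u * C u.leadingCoeff⁻¹, v * C v.leadingCoeff⁻¹)),
      ⟨trivial, ⟨monic_mul_leadingCoeff_inv hu, natDegree_mul_C (inv_ne_zero hcu)⟩,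
        ⟨monic_mul_leadingCoeff_inv hv, natDegree_mul_C (inv_ne_zero hcv)⟩,
        (isCoprime_mul_unit_right_left (isUnit_C.2 (inv_ne_zero hcu).isUnit) _ _).2
          ((isCoprime_mul_unit_right_right (isUnit_C.2 (inv_ne_zero hcv).isUnit) _ _).2 huv)⟩,
      ?_⟩
    simp [mul_assoc, ← C_mul, hcu, hcv]
  · rintro ⟨⟨⟨c, d⟩, u₁, v₁⟩, ⟨-, ⟨hu, rfl⟩, ⟨hv, rfl⟩, huv⟩, h⟩
    obtain ⟨rfl, rfl⟩ := Prod.mk.inj h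
    exact ⟨mul_ne_zero hu.ne_zero (C_ne_zero.2 c.ne_zero),
      mul_ne_zero hv.ne_zero (C_ne_zero.2 d.ne_zero),
      (isCoprime_mul_unit_right_left (isUnit_C.2 c.isUnit) _ _).2
        ((isCoprime_mul_unit_right_right (isUnit_C.2 d.isUnit) _ _).2 huv),
      natDegree_mul_C c.ne_zero, natDegree_mul_C d.ne_zero⟩

theorem ncard_coprimePairsOfDegree [Finite F] (i j : ℕ) :
    (coprimePairsOfDegree F i j).ncard =
      (Nat.card F - 1) ^ 2 * (coprimeMonicPairs F i j).ncard := by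
  rw [coprimePairsOfDegree_eq_image, Set.InjOn.ncard_image, Set.ncard_prod, Set.ncard_univ,
    Nat.card_prod, Nat.card_units, sq]
  rintro ⟨⟨c, d⟩, u, v⟩ ⟨-, ⟨hu, -⟩, ⟨hv, -⟩, -⟩
    ⟨⟨c', d'⟩, u', v'⟩ ⟨-, ⟨hu', -⟩, ⟨hv', -⟩, -⟩ h
  simp only [Prod.mk.injEq] at h
  obtain ⟨hc, rfl⟩ := hu.eq_and_eq_of_mul_C_eq_mul_C hu' c.ne_zero h.1
  obtain ⟨hd, rfl⟩ := hv.eq_and_eq_of_mul_C_eq_mul_C hv' d.ne_zero h.2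
  rw [Units.val_inj] at hc hd
  rw [hc, hd]

theorem ncard_coprimePairs_natDegree_mem [Finite F] (L : Finset (ℕ × ℕ)) :
    {p : F[X] × F[X] | p.1 ≠ 0 ∧ p.2 ≠ 0 ∧ IsCoprime p.1 p.2 ∧
        (p.1.natDegree, p.2.natDegree) ∈ L}.ncard =
      (Nat.card F - 1) ^ 2 * ∑ ij ∈ L, (coprimeMonicPairs F ij.1 ij.2).ncard := by
  have hS : {p : F[X] × F[X] | p.1 ≠ 0 ∧ p.2 ≠ 0 ∧ IsCoprime p.1 p.2 ∧
      (p.1.natDegree, p.2.natDegree) ∈ L} = ⋃ ij ∈ L, coprimePairsOfDegree F ij.1 ij.2 := by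
    ext ⟨u, v⟩
    simp only [Set.mem_ofPred_eq, Set.mem_iUnion, coprimePairsOfDegree, exists_prop, Prod.exists]
    constructor
    · rintro ⟨hu, hv, huv, h⟩
      exact ⟨_, _, h, hu, hv, huv, rfl, rfl⟩
    · rintro ⟨i, j, h, hu, hv, huv, rfl, rfl⟩
      exact ⟨hu, hv, huv, h⟩
  rw [hS, Set.ncard_biUnion_finset, Finset.mul_sum]
  · exact Finset.sum_congr rfl fun ij _ => ncard_coprimePairsOfDegree ij.1 ij.2
  · intro ij _
    rw [coprimePairsOfDegree_eq_image]
    exact (Set.finite_univ.prod (finite_coprimeMonicPairs _ _)).image _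
  · exact fun ij _ kl _ hne => Set.disjoint_left.2 fun p hp hp' =>
      hne (Prod.ext (hp.2.2.2.1.symm.trans hp'.2.2.2.1) (hp.2.2.2.2.symm.trans hp'.2.2.2.2))

theorem sum_ncard_coprimeMonicPairs_boundary [Finite F] (i j : ℕ) :
    ∑ ij ∈ {i + 1} ×ˢ Finset.range (j + 2) ∪ Finset.range (i + 1) ×ˢ {j + 1},
        (coprimeMonicPairs F ij.1 ij.2).ncard =
      Nat.card F ^ (i + j + 2) + Nat.card F ^ (i + j + 1) := by
  have hdisj : Disjoint ({i + 1} ×ˢ Finset.range (j + 2)) (Finset.range (i + 1) ×ˢ {j + 1}) :=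
    Finset.disjoint_left.2 fun ⟨k, l⟩ h h' => by
      simp only [Finset.mem_product, Finset.mem_singleton, Finset.mem_range] at h h'
      omega
  rw [Finset.sum_union hdisj, Finset.sum_product, Finset.sum_product_right, Finset.sum_singleton,
    Finset.sum_singleton, sum_range_ncard_coprimeMonicPairs]
  simp_rw [ncard_coprimeMonicPairs_comm (F := F) _ (j + 1)]
  rw [sum_range_ncard_coprimeMonicPairs]
  ring_nf

end Field

/-- Over a finite field with `q` elements, for positive `a, b, n`, the number of pairs `(u, v)`
of nonzero coprime polynomials with `deg u ≤ a·n`, `deg v ≤ b·n`, and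
(`deg u = a·n` or `deg v = b·n`), equals `(q−1)·(q^((a+b)n+1) − q^((a+b)n−1))`. -/
theorem count_T_points (F : Type*) [Field F] [Fintype F] (q : ℕ)
    (hq : Fintype.card F = q) (a b n : ℕ) (ha : 0 < a) (hb : 0 < b) (hn : 0 < n) :
    Set.ncard {p : F[X] × F[X] | p.1 ≠ 0 ∧ p.2 ≠ 0 ∧ IsCoprime p.1 p.2 ∧
        p.1.natDegree ≤ a * n ∧ p.2.natDegree ≤ b * n ∧
        (p.1.natDegree = a * n ∨ p.2.natDegree = b * n)}
      = (q - 1) * (q ^ ((a + b) * n + 1) - q ^ ((a + b) * n - 1)) := by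
  obtain ⟨A, hA⟩ := Nat.exists_eq_add_one.2 (Nat.mul_pos ha hn)
  obtain ⟨B, hB⟩ := Nat.exists_eq_add_one.2 (Nat.mul_pos hb hn)
  have hset : {p : F[X] × F[X] | p.1 ≠ 0 ∧ p.2 ≠ 0 ∧ IsCoprime p.1 p.2 ∧
      p.1.natDegree ≤ a * n ∧ p.2.natDegree ≤ b * n ∧
      (p.1.natDegree = a * n ∨ p.2.natDegree = b * n)} =
        {p | p.1 ≠ 0 ∧ p.2 ≠ 0 ∧ IsCoprime p.1 p.2 ∧ (p.1.natDegree, p.2.natDegree) ∈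
          {A + 1} ×ˢ Finset.range (B + 2) ∪ Finset.range (A + 1) ×ˢ {B + 1}} := by
    ext p
    simp only [Set.mem_ofPred_eq, Finset.mem_union, Finset.mem_product, Finset.mem_singleton,
      Finset.mem_range]
    refine and_congr_right fun _ => and_congr_right fun _ => and_congr_right fun _ => ?_
    omega
  have hq1 : 1 ≤ q := hq ▸ Fintype.card_pos
  have hN : (a + b) * n = A + B + 2 := by rw [add_mul, hA, hB]; ring
  have hN' : (a + b) * n - 1 = A + B + 1 := by omega
  rw [hset, ncard_coprimePairs_natDegree_mem, sum_ncard_coprimeMonicPairs_boundary,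
    Nat.card_eq_fintype_card, hq, hN', hN]
  have hpow : q ^ (A + B + 1) ≤ q ^ (A + B + 2 + 1) := Nat.pow_le_pow_right hq1 (by omega)
  zify [hq1, hpow]
  ring
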